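/- Let N be a semi-resolved phylogenetic network that is compressed and such that no two distinct tree vertices v, w of N satisfy ch(v) = ch(w). Then N is irreducible, i.e., N contains no identifiable pair of tree vertices. -/

import Mathlib

/-! Basic framework: labelled rooted directed multigraphs, phylogenetic
networks, (pseudo) MUL-trees, unfolding, folding maps, etc. -/

structure Dgr (X : Type) : Type 1 where
  V : Type
  A : Type
  tl : A → V
  hd : A → V
  root : V
  lab : V → Option X

namespace Dgr

variable {X : Type}

/-- There is an arc from `u` to `v`. -/
def arcRel (G : Dgr X) (u v : G.V) : Prop := ∃ a : G.A, G.tl a = u ∧ G.hd a = v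

/-- `v` is reachable from `u` by a directed path (possibly trivial);
equivalently, `v` is below `u` or equal to it. -/
def Reaches (G : Dgr X) : G.V → G.V → Prop := Relation.ReflTransGen G.arcRel

noncomputable def indeg (G : Dgr X) (v : G.V) : ℕ := Nat.card {a : G.A // G.hd a = v}
noncomputable def outdeg (G : Dgr X) (v : G.V) : ℕ := Nat.card {a : G.A // G.tl a = v}

def IsLeaf (G : Dgr X) (v : G.V) : Prop := G.outdeg v = 0

def Acyclic (G : Dgr X) : Prop := ∀ v, ¬ Relation.TransGen G.arcRel v v

/-- A finite rooted DAG: acyclic, the root has in-degree zero and every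
vertex is reachable from the root. -/
def IsRootedDAG (G : Dgr X) : Prop :=
  Finite G.V ∧ Finite G.A ∧ G.Acyclic ∧ G.indeg G.root = 0 ∧ ∀ v, G.Reaches G.root v

/-- A tree vertex: in-degree one, out-degree zero (a leaf) or at least two. -/
def IsTreeVertex (G : Dgr X) (v : G.V) : Prop :=
  G.indeg v = 1 ∧ (G.outdeg v = 0 ∨ 2 ≤ G.outdeg v)

/-- A reticulation vertex: out-degree one and in-degree at least two. -/
def IsRetVertex (G : Dgr X) (v : G.V) : Prop := G.outdeg v = 1 ∧ 2 ≤ G.indeg v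

/-- An `X`-network: rooted DAG (multi-arcs allowed), root of out-degree ≥ 2,
every non-root vertex a tree vertex or a reticulation vertex, and the leaves
are labelled bijectively by `X`. -/
def IsXNetwork (G : Dgr X) : Prop :=
  G.IsRootedDAG ∧ 2 ≤ G.outdeg G.root ∧
  (∀ v, v ≠ G.root → G.IsTreeVertex v ∨ G.IsRetVertex v) ∧
  (∀ v, (∃ x, G.lab v = some x) ↔ G.IsLeaf v) ∧
  (∀ x : X, ∃! v, G.lab v = some x)

def NoMultiArcs (G : Dgr X) : Prop :=
  ∀ a b : G.A, G.tl a = G.tl b → G.hd a = G.hd b → a = b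

/-- A phylogenetic network on `X`: an `X`-network without multi-arcs. -/
def IsPhyloNetwork (G : Dgr X) : Prop := G.IsXNetwork ∧ G.NoMultiArcs

/-- A phylogenetic tree on `X`: a phylogenetic network with no reticulations. -/
def IsPhyloTree (G : Dgr X) : Prop := G.IsPhyloNetwork ∧ ∀ v, ¬ G.IsRetVertex v

/-- A pseudo MUL-tree on `X`: a finite rooted tree whose leaves are labelled
by elements of `X` (several leaves may share a label, every element of `X`
is used, and exactly the leaves are labelled). -/
def IsPMulTree (G : Dgr X) : Prop :=
  G.IsRootedDAG ∧ (∀ v, v ≠ G.root → G.indeg v = 1) ∧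
  (∀ v, (∃ x, G.lab v = some x) ↔ G.IsLeaf v) ∧
  (∀ x : X, ∃ v, G.lab v = some x)

/-- A MUL-tree: a pseudo MUL-tree with no in-degree-one out-degree-one vertex. -/
def IsMulTree (G : Dgr X) : Prop :=
  G.IsPMulTree ∧ ∀ v, ¬ (G.indeg v = 1 ∧ G.outdeg v = 1)

/-- Isomorphism of labelled rooted directed multigraphs. -/
def Iso (G H : Dgr X) : Prop :=
  ∃ (φ : G.V ≃ H.V) (ψ : G.A ≃ H.A),
    (∀ a, H.tl (ψ a) = φ (G.tl a)) ∧ (∀ a, H.hd (ψ a) = φ (G.hd a)) ∧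
    φ G.root = H.root ∧ (∀ v, H.lab (φ v) = G.lab v)

/-- The pendant subgraph rooted at `v` (everything below or equal to `v`). -/
def pendant (G : Dgr X) (v : G.V) : Dgr X where
  V := {w : G.V // G.Reaches v w}
  A := {a : G.A // G.Reaches v (G.tl a)}
  tl a := ⟨G.tl a.1, a.2⟩
  hd a := ⟨G.hd a.1, a.2.tail ⟨a.1, rfl, rfl⟩⟩
  root := ⟨v, Relation.ReflTransGen.refl⟩
  lab w := G.lab w.1

/-- Directed paths in `G` starting at the root, ending at the index vertex. -/
inductive RPath (G : Dgr X) : G.V → Type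
  | nil : RPath G G.root
  | cons {v : G.V} (p : RPath G v) (a : G.A) (h : G.tl a = v) : RPath G (G.hd a)

/-- The path-tree `U*(G)`: vertices are directed root-paths of `G`, arcs are
one-arc extensions, the label of a path is the label of its last vertex. -/
def Ustar (G : Dgr X) : Dgr X where
  V := Σ v : G.V, RPath G v
  A := Σ v : G.V, RPath G v × {a : G.A // G.tl a = v}
  tl x := ⟨x.1, x.2.1⟩
  hd x := ⟨G.hd x.2.2.1, RPath.cons x.2.1 x.2.2.1 x.2.2.2⟩
  root := ⟨G.root, RPath.nil⟩
  lab x := G.lab x.1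

/-- Vertices kept by the suppression operation (the root is always kept). -/
def Keep (G : Dgr X) (v : G.V) : Prop :=
  v = G.root ∨ ¬ (G.indeg v = 1 ∧ G.outdeg v = 1)

def startV (G : Dgr X) (l : List G.A) : G.V :=
  match l.head? with
  | some a => G.tl a
  | none => G.root

def endV (G : Dgr X) (l : List G.A) : G.V :=
  match l.getLast? with
  | some a => G.hd a
  | none => G.root

/-- `l` is a composable sequence of arcs. -/
def IsChain (G : Dgr X) (l : List G.A) : Prop :=
  ∀ p a b s, l = p ++ a :: b :: s → G.hd a = G.tl b

/-- An arc of the suppression: a nonempty directed path between kept vertices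
all of whose intermediate vertices are suppressed. -/
def IsSuppArc (G : Dgr X) (l : List G.A) : Prop :=
  l ≠ [] ∧ G.IsChain l ∧ G.Keep (G.startV l) ∧ G.Keep (G.endV l) ∧
  ∀ p a s, l = p ++ a :: s → s ≠ [] → ¬ G.Keep (G.hd a)

/-- Suppression of all in-degree-one out-degree-one vertices. -/
def suppress (G : Dgr X) : Dgr X where
  V := {v : G.V // G.Keep v}
  A := {l : List G.A // G.IsSuppArc l}
  tl l := ⟨G.startV l.1, l.2.2.2.1⟩
  hd l := ⟨G.endV l.1, l.2.2.2.2.1⟩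
  root := ⟨G.root, Or.inl rfl⟩
  lab v := G.lab v.1

/-- The unfolding `U(G)`: the path-tree with in-degree-one out-degree-one
vertices suppressed. -/
def U (G : Dgr X) : Dgr X := G.Ustar.suppress

/-- An `X`-morphism: maps on vertices and arcs commuting with heads and tails
and preserving the leaf-labelling by `X`. -/
structure Mor (G H : Dgr X) where
  fV : G.V → H.V
  fA : G.A → H.A
  tl_comm : ∀ a, H.tl (fA a) = fV (G.tl a)
  hd_comm : ∀ a, H.hd (fA a) = fV (G.hd a)
  lab_pres : ∀ v x, G.lab v = some x → H.lab (fV v) = some x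

def Mor.IsRooted {G H : Dgr X} (f : Mor G H) : Prop := f.fV G.root = H.root

/-- A folding map: a surjective `X`-morphism with the unique arc-lifting
property. -/
def Mor.IsFolding {G H : Dgr X} (f : Mor G H) : Prop :=
  Function.Surjective f.fV ∧ Function.Surjective f.fA ∧
  ∀ (a : H.A) (v : G.V), f.fV v = H.tl a →
    ∃! b : G.A, G.tl b = v ∧ f.fA b = a

/-- The canonical map `U*(G) → G` sending a root-path to its last vertex. -/
def fstar (G : Dgr X) : Mor G.Ustar G where
  fV x := x.1
  fA x := x.2.2.1
  tl_comm a := a.2.2.2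
  hd_comm _ := rfl
  lab_pres _ _ h := h

/-- `v` is an interior vertex of the arc-sequence `l`. -/
def IsInteriorOf (G : Dgr X) (l : List G.A) (v : G.V) : Prop :=
  ∃ p a s, l = p ++ a :: s ∧ s ≠ [] ∧ G.hd a = v

/-- `G'` is a subdivision of `G`. -/
def IsSubdivisionOf (G' G : Dgr X) : Prop :=
  ∃ (φ : G.V → G'.V) (ψ : G.A → List G'.A),
    Function.Injective φ ∧ φ G.root = G'.root ∧
    (∀ v, G'.lab (φ v) = G.lab v) ∧
    (∀ a, ψ a ≠ [] ∧ G'.IsChain (ψ a) ∧ G'.startV (ψ a) = φ (G.tl a) ∧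
      G'.endV (ψ a) = φ (G.hd a) ∧
      ∀ v, G'.IsInteriorOf (ψ a) v → v ∉ Set.range φ) ∧
    (∀ v' : G'.V, v' ∉ Set.range φ →
      G'.indeg v' = 1 ∧ G'.outdeg v' = 1 ∧ G'.lab v' = none) ∧
    (∀ a' : G'.A, ∃! a : G.A, a' ∈ ψ a)

/-- `H` is (isomorphic to) a subgraph of `G`. -/
def IsSubgraphOf (H G : Dgr X) : Prop :=
  ∃ (φ : H.V → G.V) (ψ : H.A → G.A),
    Function.Injective φ ∧ Function.Injective ψ ∧
    (∀ a, G.tl (ψ a) = φ (H.tl a)) ∧ (∀ a, G.hd (ψ a) = φ (H.hd a)) ∧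
    (∀ v, H.lab v = G.lab (φ v))

/-- `G` displays `T`: some subgraph of `G` is a subdivision of `T`. -/
def Displays (G T : Dgr X) : Prop :=
  ∃ H : Dgr X, IsSubgraphOf H G ∧ IsSubdivisionOf H T

/-- `T` is weakly displayed by `G`: `T` is displayed by the unfolding `U(G)`. -/
def WeaklyDisplays (G T : Dgr X) : Prop := Displays G.U T

/-- `N` is (isomorphic to) the folding `F(T)` of the MUL-tree `T`: `N` is an
`X`-network obtained as the quotient of a subdivision `T'` of `T` by the
relation identifying vertices with isomorphic pendant subtrees, the quotient
map being a folding map whose fibres are exactly the classes of that relation. -/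
def IsFoldingOf (N T : Dgr X) : Prop :=
  N.IsXNetwork ∧ ∃ T' : Dgr X, IsSubdivisionOf T' T ∧
    ∃ f : Mor T' N, f.IsFolding ∧
      ∀ u v : T'.V, f.fV u = f.fV v ↔ Iso (T'.pendant u) (T'.pendant v)

/-- `N` is stable: `F(U(N))` is isomorphic to `N`. -/
def Stable (N : Dgr X) : Prop :=
  ∃ N' : Dgr X, IsFoldingOf N' N.U ∧ Iso N' N

/-- `T'` is the guide tree `T†` of the folding operation applied to `T`:
a subdivision of `T` whose quotient by the isomorphic-pendant-subtree
relation is an `X`-network via a folding map. -/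
def IsDaggerOf (T' T : Dgr X) : Prop :=
  IsSubdivisionOf T' T ∧ ∃ (N : Dgr X) (f : Mor T' N), N.IsXNetwork ∧
    f.IsFolding ∧
    ∀ u v : T'.V, f.fV u = f.fV v ↔ Iso (T'.pendant u) (T'.pendant v)

/-- The child of every reticulation vertex is a tree vertex. -/
def Compressed (N : Dgr X) : Prop :=
  ∀ a : N.A, N.IsRetVertex (N.tl a) → N.IsTreeVertex (N.hd a)

/-- Every (non-leaf) tree vertex has out-degree two. -/
def SemiResolved (N : Dgr X) : Prop :=
  ∀ v, N.indeg v = 1 → N.outdeg v = 0 ∨ N.outdeg v = 2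

/-- Binary phylogenetic network. -/
def BinaryNet (N : Dgr X) : Prop :=
  N.outdeg N.root = 2 ∧ ∀ v, v ≠ N.root →
    (N.IsRetVertex v → N.indeg v = 2) ∧
    (N.indeg v = 1 → N.outdeg v = 0 ∨ N.outdeg v = 2)

/-- Binary tree: every vertex has out-degree zero or two. -/
def BinaryTree (T : Dgr X) : Prop := ∀ v, T.outdeg v = 0 ∨ T.outdeg v = 2

/-- The set of children of a vertex. -/
def children (N : Dgr X) (v : N.V) : Set N.V := {w | ∃ a, N.tl a = v ∧ N.hd a = w}

/-- Tree-sibling network: every reticulation vertex has a sibling that is a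
tree vertex. -/
def TreeSibling (N : Dgr X) : Prop :=
  ∀ v, N.IsRetVertex v → ∃ w, w ≠ v ∧ N.IsTreeVertex w ∧
    ∃ a b : N.A, N.tl a = N.tl b ∧ N.hd a = v ∧ N.hd b = w

/-- The final vertex in `N` of (the path underlying) a vertex of `U(N)`. -/
def endOf (N : Dgr X) (p : N.U.V) : N.V := p.1.1

/-- Identifiable pair of tree vertices. -/
def Identifiable (N : Dgr X) (v w : N.V) : Prop :=
  v ≠ w ∧ N.IsTreeVertex v ∧ N.IsTreeVertex w ∧
  ∃ p q : N.U.V, N.endOf p = v ∧ N.endOf q = w ∧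
    Iso (N.U.pendant p) (N.U.pendant q)

/-- Irreducible network: no identifiable pair of tree vertices. -/
def Irreducible (N : Dgr X) : Prop := ¬ ∃ v w, N.Identifiable v w

/-- The pendant subtree at `v` is inextendible: some other vertex carries an
isomorphic pendant subtree. -/
def Inextendible (T : Dgr X) (v : T.V) : Prop :=
  ∃ v', v' ≠ v ∧ Iso (T.pendant v) (T.pendant v')

/-- A reconciliation map between a tree `T` and a network `N`. -/
structure Recon (T N : Dgr X) where
  r : T.V → N.V
  P : T.A → List N.A
  tree_or_root : ∀ v, r v = N.root ∨ N.IsTreeVertex (r v)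
  leaf_fix : ∀ v x, T.lab v = some x → N.lab (r v) = some x
  chain : ∀ a, N.IsChain (P a)
  trivialP : ∀ a, P a = [] → r (T.tl a) = r (T.hd a)
  startP : ∀ a, P a ≠ [] → N.startV (P a) = r (T.tl a)
  endP : ∀ a, P a ≠ [] → N.endV (P a) = r (T.hd a)

/-- Locally separated reconciliation: for any two distinct arcs of `T` with
the same tail, both associated paths are nonempty and have distinct initial
arcs. -/
def Recon.LocSep {T N : Dgr X} (ρ : Recon T N) : Prop :=
  ∀ a b : T.A, a ≠ b → T.tl a = T.tl b →
    ρ.P a ≠ [] ∧ ρ.P b ≠ [] ∧ (ρ.P a).head? ≠ (ρ.P b).head?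

/-- The pendant subnetwork `N(u)`: restrict below `u` and suppress. -/
def Nsub (N : Dgr X) (u : N.V) : Dgr X := (N.pendant u).suppress

/-- The function `τ` of the dynamic program (as a proposition, `τ(v,u)=1`). -/
def tau (T N : Dgr X) (v : T.V) (u : N.V) : Prop :=
  (T.IsLeaf v → ∀ x, T.lab v = some x →
     ∃ u' : N.V, N.lab u' = some x ∧ N.Reaches u u') ∧
  (¬ T.IsLeaf v → ∃ u' : N.V, (u' = N.root ∨ N.IsTreeVertex u') ∧
     N.Reaches u u' ∧ ∃ ρ : Recon (T.pendant v) (N.Nsub u'), ρ.LocSep)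

/-- The result of `HangLeaves(v)` on the network `N` (new leaves are labelled
by the two new elements of `X ⊕ Fin 2`); vertices `inr 0, 1, 2, 3, 4` are
`x_v, x'_v, p_v, q_v, ρ_v` respectively. -/
def HangN (N : Dgr X) (v : N.V) : Dgr (X ⊕ Fin 2) where
  V := N.V ⊕ Fin 5
  A := N.A ⊕ Fin 6
  tl := Sum.elim (fun a => Sum.inl (N.tl a))
    ![Sum.inr 4, Sum.inr 4, Sum.inr 2, Sum.inl v, Sum.inr 2, Sum.inr 3]
  hd := Sum.elim (fun a => Sum.inl (N.hd a))
    ![Sum.inl N.root, Sum.inr 2, Sum.inr 3, Sum.inr 3, Sum.inr 1, Sum.inr 0]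
  root := Sum.inr 4
  lab := Sum.elim (fun w => (N.lab w).map Sum.inl)
    ![some (Sum.inr 0), some (Sum.inr 1), none, none, none]

/-- The result of `HangLeaves` on the tree `T`; vertices `inr 0, 1, 2, 3` are
`x_v, x'_v, p_v, ρ_v` respectively. -/
def HangT (T : Dgr X) : Dgr (X ⊕ Fin 2) where
  V := T.V ⊕ Fin 4
  A := T.A ⊕ Fin 4
  tl := Sum.elim (fun a => Sum.inl (T.tl a))
    ![Sum.inr 3, Sum.inr 3, Sum.inr 2, Sum.inr 2]
  hd := Sum.elim (fun a => Sum.inl (T.hd a))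
    ![Sum.inl T.root, Sum.inr 2, Sum.inr 0, Sum.inr 1]
  root := Sum.inr 3
  lab := Sum.elim (fun w => (T.lab w).map Sum.inl)
    ![some (Sum.inr 0), some (Sum.inr 1), none, none]

end Dgr

/-!
Suppose tree vertices `v ≠ w` are reached by root-paths `p`, `q` whose pendant subtrees in `U(N)`
are isomorphic; we argue by well-founded induction on `v` downwards in `N`. If `v` is a leaf, the
isomorphism preserves its label, so `w = v`. Otherwise, as `N` is compressed, every arc of `U(N)`
leaving `p` follows an arc `a` out of `v`, extended through `N.hd a` when that is a reticulation,
and ends at a tree vertex `t` strictly below `v`. The isomorphism matches it with an arc leaving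
`q` that likewise comes from an arc `a'` out of `w` and ends at a tree vertex, which by induction
is `t`. Since `t` has a single parent and `v ≠ w`, the arcs `a` and `a'` share their head. Hence
`ch(v) ⊆ ch(w)`, by symmetry `ch(v) = ch(w)`, contradicting the hypothesis.
-/

namespace Dgr

variable {X : Type}

section Iso

variable {G H K : Dgr X}

lemma arcRel_map_iff (φ : G.V ≃ H.V) (ψ : G.A ≃ H.A) (htl : ∀ a, H.tl (ψ a) = φ (G.tl a))
    (hhd : ∀ a, H.hd (ψ a) = φ (G.hd a)) (x y : G.V) :
    H.arcRel (φ x) (φ y) ↔ G.arcRel x y := by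
  constructor
  · rintro ⟨a, hx, hy⟩
    refine ⟨ψ.symm a, φ.injective ?_, φ.injective ?_⟩
    · rw [← htl, ψ.apply_symm_apply, hx]
    · rw [← hhd, ψ.apply_symm_apply, hy]
  · rintro ⟨a, rfl, rfl⟩
    exact ⟨ψ a, htl a, hhd a⟩

lemma reaches_map_iff (φ : G.V ≃ H.V) (ψ : G.A ≃ H.A) (htl : ∀ a, H.tl (ψ a) = φ (G.tl a))
    (hhd : ∀ a, H.hd (ψ a) = φ (G.hd a)) (x y : G.V) :
    H.Reaches (φ x) (φ y) ↔ G.Reaches x y := by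
  constructor
  · intro h
    simpa [Function.onFun, Reaches] using Relation.ReflTransGen.lift φ.symm
      (fun u v huv => (arcRel_map_iff φ ψ htl hhd _ _).1 (by simpa using huv)) _ _ h
  · exact Relation.ReflTransGen.lift φ (fun u v => (arcRel_map_iff φ ψ htl hhd u v).2) x y

lemma Iso.symm (h : Iso G H) : Iso H G := by
  obtain ⟨φ, ψ, htl, hhd, hroot, hlab⟩ := h
  refine ⟨φ.symm, ψ.symm, fun a => ?_, fun a => ?_, φ.symm_apply_eq.2 hroot.symm, fun v => ?_⟩
  · rw [φ.eq_symm_apply, ← htl, ψ.apply_symm_apply]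
  · rw [φ.eq_symm_apply, ← hhd, ψ.apply_symm_apply]
  · rw [← hlab, φ.apply_symm_apply]

lemma Iso.trans (h₁ : Iso G H) (h₂ : Iso H K) : Iso G K := by
  obtain ⟨φ₁, ψ₁, htl₁, hhd₁, hroot₁, hlab₁⟩ := h₁
  obtain ⟨φ₂, ψ₂, htl₂, hhd₂, hroot₂, hlab₂⟩ := h₂
  exact ⟨φ₁.trans φ₂, ψ₁.trans ψ₂, by simp [htl₁, htl₂], by simp [hhd₁, hhd₂],
    by simp [hroot₁, hroot₂], by simp [hlab₁, hlab₂]⟩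

lemma Iso.lab_root (h : Iso G H) : H.lab H.root = G.lab G.root := by
  obtain ⟨φ, -, -, -, hroot, hlab⟩ := h
  rw [← hroot, hlab]

lemma iso_pendant_map (φ : G.V ≃ H.V) (ψ : G.A ≃ H.A) (htl : ∀ a, H.tl (ψ a) = φ (G.tl a))
    (hhd : ∀ a, H.hd (ψ a) = φ (G.hd a)) (hlab : ∀ v, H.lab (φ v) = G.lab v) (z : G.V) :
    Iso (G.pendant z) (H.pendant (φ z)) :=
  ⟨φ.subtypeEquiv fun w => (reaches_map_iff φ ψ htl hhd z w).symm,
    ψ.subtypeEquiv fun a => by rw [htl a]; exact (reaches_map_iff φ ψ htl hhd z _).symm,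
    fun a => Subtype.ext (htl a.1), fun a => Subtype.ext (hhd a.1), rfl, fun w => hlab w.1⟩

lemma pendant_reaches_iff (G : Dgr X) (u : G.V) (z w : (G.pendant u).V) :
    (G.pendant u).Reaches z w ↔ G.Reaches z.1 w.1 := by
  refine ⟨Relation.ReflTransGen.lift Subtype.val
    (fun _ _ ⟨a, ha, hb⟩ => ⟨a.1, congrArg Subtype.val ha, congrArg Subtype.val hb⟩) z w, ?_⟩
  obtain ⟨w, hw⟩ := w
  intro h
  change G.Reaches z.1 w at h
  revert hw
  induction h with
  | refl => exact fun _ => Relation.ReflTransGen.refl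
  | tail hzb hbw ih =>
    obtain ⟨a, ha, rfl⟩ := hbw
    have hub := z.2.trans hzb
    exact fun _ => (ih hub).tail ⟨⟨a, ha ▸ hub⟩, Subtype.ext ha, rfl⟩

lemma iso_pendant_pendant (G : Dgr X) (u : G.V) (z : (G.pendant u).V) :
    Iso ((G.pendant u).pendant z) (G.pendant z.1) :=
  ⟨⟨fun w => ⟨w.1.1, (pendant_reaches_iff G u z w.1).1 w.2⟩,
      fun w => ⟨⟨w.1, z.2.trans w.2⟩, (pendant_reaches_iff G u z _).2 w.2⟩,
      fun _ => rfl, fun _ => rfl⟩,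
    ⟨fun a => ⟨a.1.1, (pendant_reaches_iff G u z _).1 a.2⟩,
      fun a => ⟨⟨a.1, z.2.trans a.2⟩, (pendant_reaches_iff G u z _).2 a.2⟩,
      fun _ => rfl, fun _ => rfl⟩,
    fun _ => rfl, fun _ => rfl, rfl, fun _ => rfl⟩

lemma Iso.exists_arc_pendant {p q : G.V} (hiso : Iso (G.pendant p) (G.pendant q)) {e : G.A}
    (he : G.tl e = p) :
    ∃ e' : G.A, G.tl e' = q ∧ Iso (G.pendant (G.hd e)) (G.pendant (G.hd e')) := by
  obtain ⟨φ, ψ, htl, hhd, hroot, hlab⟩ := hiso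
  let ε : (G.pendant p).A := ⟨e, he ▸ Relation.ReflTransGen.refl⟩
  have hε : (G.pendant p).tl ε = (G.pendant p).root := Subtype.ext he
  refine ⟨(ψ ε).1, congrArg Subtype.val ((htl ε).trans ((congrArg φ hε).trans hroot)), ?_⟩
  have hmap := iso_pendant_map φ ψ htl hhd hlab ((G.pendant p).hd ε)
  rw [← hhd ε] at hmap
  exact ((iso_pendant_pendant G p _).symm.trans hmap).trans (iso_pendant_pendant G q _)

end Iso

section PathTree

variable (G : Dgr X)

def lastArc : G.Ustar.V → Option G.Ustar.A
  | ⟨_, RPath.nil⟩ => none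
  | ⟨_, RPath.cons (v := v) π a h⟩ => some ⟨v, π, a, h⟩

lemma ustar_hd_eq_iff (x : G.Ustar.A) (t : G.Ustar.V) :
    G.Ustar.hd x = t ↔ G.lastArc t = some x := by
  constructor
  · rintro rfl
    rfl
  · obtain ⟨w, π⟩ := t
    cases π with
    | nil => simp [lastArc]
    | cons π a h =>
      rintro ⟨⟩
      rfl

lemma ustar_indeg_hd (x : G.Ustar.A) : G.Ustar.indeg (G.Ustar.hd x) = 1 :=
  Nat.card_eq_one_iff_unique.2
    ⟨⟨fun y z => Subtype.ext <| Option.some_injective _ <|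
      ((G.ustar_hd_eq_iff _ _).1 y.2).symm.trans ((G.ustar_hd_eq_iff _ _).1 z.2)⟩, ⟨⟨x, rfl⟩⟩⟩

lemma ustar_hd_ne_root (x : G.Ustar.A) : G.Ustar.hd x ≠ G.Ustar.root :=
  fun h => Option.some_ne_none x ((G.ustar_hd_eq_iff x _).1 h).symm

def ustarOutArcsEquiv (s : G.Ustar.V) :
    {x : G.Ustar.A // G.Ustar.tl x = s} ≃ {a : G.A // G.tl a = s.1} where
  toFun x := ⟨x.1.2.2.1, x.1.2.2.2.trans (congrArg Sigma.fst x.2)⟩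
  invFun a := ⟨⟨s.1, s.2, a.1, a.2⟩, rfl⟩
  left_inv := by rintro ⟨⟨v, π, a, ha⟩, rfl⟩; rfl
  right_inv _ := rfl

lemma ustar_outdeg (s : G.Ustar.V) : G.Ustar.outdeg s = G.outdeg s.1 :=
  Nat.card_congr (G.ustarOutArcsEquiv s)

lemma ustar_keep_of_outdeg_ne_one {t : G.Ustar.V} (h : G.outdeg t.1 ≠ 1) : G.Ustar.Keep t :=
  Or.inr fun hk => h (G.ustar_outdeg t ▸ hk.2)

lemma ustar_not_keep_hd {x : G.Ustar.A} (h : G.outdeg (G.Ustar.hd x).1 = 1) :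
    ¬ G.Ustar.Keep (G.Ustar.hd x) := by
  rintro (hroot | hk)
  · exact G.ustar_hd_ne_root x hroot
  · exact hk ⟨G.ustar_indeg_hd x, G.ustar_outdeg _ ▸ h⟩

lemma isSuppArc_singleton {x : G.A} (htl : G.Keep (G.tl x)) (hhd : G.Keep (G.hd x)) :
    G.IsSuppArc [x] := by
  refine ⟨List.cons_ne_nil _ _, fun p a b s h => ?_, htl, hhd, fun p a s h hs => ?_⟩
  · rcases p with _ | ⟨_, _ | _⟩ <;> simp_all
  · rcases p with _ | ⟨_, _ | _⟩ <;> simp_all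

lemma isSuppArc_pair {x y : G.A} (hxy : G.hd x = G.tl y) (htl : G.Keep (G.tl x))
    (hhd : G.Keep (G.hd y)) (hmid : ¬ G.Keep (G.hd x)) : G.IsSuppArc [x, y] := by
  refine ⟨List.cons_ne_nil _ _, fun p a b s h => ?_, htl, hhd, fun p a s h hs => ?_⟩
  · rcases p with _ | ⟨_, _ | _⟩ <;> simp_all
  · rcases p with _ | ⟨_, _ | _⟩ <;> simp_all

end PathTree

lemma Acyclic.wellFounded_flip_transGen {G : Dgr X} [Finite G.V] (hG : G.Acyclic) :
    WellFounded (flip (Relation.TransGen G.arcRel)) :=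
  have : Std.Irrefl (flip (Relation.TransGen G.arcRel)) := ⟨hG⟩
  have : IsTrans G.V (flip (Relation.TransGen G.arcRel)) := ⟨fun _ _ _ h₁ h₂ => h₂.trans h₁⟩
  Finite.wellFounded_of_trans_of_irrefl _

section Network

variable {N : Dgr X}

lemma IsTreeVertex.not_isRetVertex {v : N.V} (hv : N.IsTreeVertex v) : ¬ N.IsRetVertex v :=
  fun hr => by have := hv.1; have := hr.2; omega

lemma IsTreeVertex.outdeg_ne_one {v : N.V} (hv : N.IsTreeVertex v) : N.outdeg v ≠ 1 := by
  rcases hv.2 with h | h <;> omega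

lemma IsXNetwork.isTreeVertex_or_isRetVertex_hd (hN : N.IsXNetwork) (a : N.A) :
    N.IsTreeVertex (N.hd a) ∨ N.IsRetVertex (N.hd a) := by
  have : Finite N.A := hN.1.2.1
  refine hN.2.2.1 _ fun hroot => ?_
  have : Nonempty {b : N.A // N.hd b = N.root} := ⟨⟨a, hroot⟩⟩
  exact Nat.card_pos.ne' hN.1.2.2.2.1

lemma eq_of_hd_eq_of_indeg_eq_one {t : N.V} (ht : N.indeg t = 1) {a b : N.A}
    (ha : N.hd a = t) (hb : N.hd b = t) : a = b :=
  have := (Nat.card_eq_one_iff_unique.1 ht).1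
  congrArg Subtype.val (Subsingleton.elim (⟨a, ha⟩ : {x : N.A // N.hd x = t}) ⟨b, hb⟩)

/-- Path-vertices of `U*(N)` ending at a reticulation are suppressed in `U(N)`, so an arc of
`U(N)` follows an arc `a` of `N` and, when `N.hd a` is a reticulation, its out-arc. -/
def LeadsTo (N : Dgr X) (a : N.A) (t : N.V) : Prop :=
  N.hd a = t ∨ (N.IsRetVertex (N.hd a) ∧ ∃ b, N.tl b = N.hd a ∧ N.hd b = t)

lemma LeadsTo.transGen {a : N.A} {t : N.V} (h : N.LeadsTo a t) :
    Relation.TransGen N.arcRel (N.tl a) t := by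
  rcases h with rfl | ⟨-, b, hb, rfl⟩
  · exact .single ⟨a, rfl, rfl⟩
  · exact .tail (.single ⟨a, rfl, rfl⟩) ⟨b, hb, rfl⟩

lemma LeadsTo.tl_eq_or_hd_eq {a a' : N.A} {t : N.V} (h : N.LeadsTo a t) (h' : N.LeadsTo a' t)
    (ha : N.IsTreeVertex (N.tl a)) (ha' : N.IsTreeVertex (N.tl a')) (ht : N.IsTreeVertex t) :
    N.tl a = N.tl a' ∨ N.hd a = N.hd a' := by
  have hunique := @eq_of_hd_eq_of_indeg_eq_one _ _ _ ht.1
  rcases h with h | ⟨hr, b, hb, hbt⟩ <;> rcases h' with h' | ⟨hr', b', hb', hbt'⟩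
  · exact Or.inl (by rw [hunique h h'])
  · exact (ha.not_isRetVertex (by rwa [hunique h hbt', hb'])).elim
  · exact (ha'.not_isRetVertex (by rwa [hunique h' hbt, hb])).elim
  · exact Or.inr (by rw [← hb, ← hb', hunique hbt hbt'])

lemma exists_U_arc_leadsTo (hN : N.IsXNetwork) (hc : N.Compressed) (p : N.U.V) {a : N.A}
    (ha : N.tl a = N.endOf p) :
    ∃ e : N.U.A, N.U.tl e = p ∧ N.LeadsTo a (N.endOf (N.U.hd e)) ∧
      N.IsTreeVertex (N.endOf (N.U.hd e)) := by
  let x : N.Ustar.A := ⟨_, p.1.2, a, ha⟩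
  have hx : N.Ustar.tl x = p.1 := rfl
  rcases hN.isTreeVertex_or_isRetVertex_hd a with ht | hr
  · exact ⟨⟨[x], N.Ustar.isSuppArc_singleton (hx ▸ p.2)
      (N.ustar_keep_of_outdeg_ne_one ht.outdeg_ne_one)⟩, Subtype.ext hx, Or.inl rfl, ht⟩
  · obtain ⟨⟨b, hb⟩⟩ := (Nat.card_eq_one_iff_unique.1 hr.1).2
    have hbt : N.IsTreeVertex (N.hd b) := hc b (hb ▸ hr)
    let y : N.Ustar.A := ⟨N.hd a, RPath.cons p.1.2 a ha, b, hb⟩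
    exact ⟨⟨[x, y], N.Ustar.isSuppArc_pair rfl (hx ▸ p.2)
      (N.ustar_keep_of_outdeg_ne_one hbt.outdeg_ne_one) (N.ustar_not_keep_hd hr.1)⟩,
      Subtype.ext hx, Or.inr ⟨hr, b, hb, rfl⟩, hbt⟩

lemma exists_leadsTo_of_U_arc (hN : N.IsXNetwork) (hc : N.Compressed) (e : N.U.A) :
    ∃ a : N.A, N.tl a = N.endOf (N.U.tl e) ∧ N.LeadsTo a (N.endOf (N.U.hd e)) ∧
      N.IsTreeVertex (N.endOf (N.U.hd e)) := by
  obtain ⟨l, hl⟩ := e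
  obtain ⟨x, l, rfl⟩ := List.exists_cons_of_ne_nil hl.1
  have hlast : ∀ p y s, x :: l = p ++ y :: s → N.Ustar.Keep (N.Ustar.hd y) → s = [] :=
    fun p y s h hk => by_contra fun hs => hl.2.2.2.2 p y s h hs hk
  rcases hN.isTreeVertex_or_isRetVertex_hd x.2.2.1 with ht | hr
  · obtain rfl : l = [] := hlast [] x l rfl (N.ustar_keep_of_outdeg_ne_one ht.outdeg_ne_one)
    exact ⟨x.2.2.1, x.2.2.2, Or.inl rfl, ht⟩
  · have hne : l ≠ [] := by
      rintro rfl
      exact N.ustar_not_keep_hd hr.1 hl.2.2.2.1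
    obtain ⟨y, l, rfl⟩ := List.exists_cons_of_ne_nil hne
    have hxy : N.tl y.2.2.1 = N.hd x.2.2.1 :=
      y.2.2.2.trans (congrArg Sigma.fst (hl.2.1 [] x y l rfl).symm)
    have hyt : N.IsTreeVertex (N.hd y.2.2.1) := hc _ (hxy ▸ hr)
    obtain rfl : l = [] := hlast [x] y l rfl (N.ustar_keep_of_outdeg_ne_one hyt.outdeg_ne_one)
    exact ⟨x.2.2.1, x.2.2.2, Or.inr ⟨hr, y.2.2.1, hxy, rfl⟩, hyt⟩

lemma children_subset_of_iso_pendant (hN : N.IsXNetwork) (hc : N.Compressed) {p q : N.U.V}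
    (hiso : Iso (N.U.pendant p) (N.U.pendant q))
    (hsucc : ∀ e e' : N.U.A, N.U.tl e = p → N.U.tl e' = q →
      Iso (N.U.pendant (N.U.hd e)) (N.U.pendant (N.U.hd e')) →
        N.endOf (N.U.hd e) = N.endOf (N.U.hd e'))
    (hp : N.IsTreeVertex (N.endOf p)) (hq : N.IsTreeVertex (N.endOf q))
    (hpq : N.endOf p ≠ N.endOf q) :
    N.children (N.endOf p) ⊆ N.children (N.endOf q) := by
  rintro c ⟨a, ha, rfl⟩
  obtain ⟨e, he, hat, ht⟩ := exists_U_arc_leadsTo hN hc p ha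
  obtain ⟨e', he', hiso'⟩ := hiso.exists_arc_pendant he
  obtain ⟨a', ha', ha't, -⟩ := exists_leadsTo_of_U_arc hN hc e'
  rw [he'] at ha'
  rw [← hsucc e e' he he' hiso'] at ha't
  rcases hat.tl_eq_or_hd_eq ha't (ha ▸ hp) (ha' ▸ hq) ht with htl | hhd
  · exact absurd (ha.symm.trans (htl.trans ha')) hpq
  · exact ⟨a', ha', hhd.symm⟩

theorem endOf_eq_of_iso_pendant (hN : N.IsXNetwork) (hc : N.Compressed)
    (h : ¬ ∃ v w : N.V, v ≠ w ∧ N.IsTreeVertex v ∧ N.IsTreeVertex w ∧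
      N.children v = N.children w)
    {p q : N.U.V} (hp : N.IsTreeVertex (N.endOf p)) (hq : N.IsTreeVertex (N.endOf q))
    (hiso : Iso (N.U.pendant p) (N.U.pendant q)) :
    N.endOf p = N.endOf q := by
  have : Finite N.V := hN.1.1
  induction hv : N.endOf p using hN.1.2.2.1.wellFounded_flip_transGen.induction
    generalizing p q with
  | _ v IH =>
    subst hv
    cases hx : N.lab (N.endOf p) with
    | some x => exact (hN.2.2.2.2 x).unique hx (hiso.lab_root.trans hx)
    | none =>
      by_contra hpq
      have hsucc : ∀ e e' : N.U.A, N.U.tl e = p → N.U.tl e' = q →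
          Iso (N.U.pendant (N.U.hd e)) (N.U.pendant (N.U.hd e')) →
            N.endOf (N.U.hd e) = N.endOf (N.U.hd e') := by
        rintro e e' rfl - hiso'
        obtain ⟨a, ha, hat, ht⟩ := exists_leadsTo_of_U_arc hN hc e
        obtain ⟨-, -, -, ht'⟩ := exists_leadsTo_of_U_arc hN hc e'
        exact IH _ (ha ▸ hat.transGen) ht ht' hiso' rfl
      refine h ⟨_, _, hpq, hp, hq, subset_antisymm
        (children_subset_of_iso_pendant hN hc hiso hsucc hp hq hpq)
        (children_subset_of_iso_pendant hN hc hiso.symm ?_ hq hp (Ne.symm hpq))⟩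
      exact fun e e' he he' hiso' => (hsucc e' e he' he hiso'.symm).symm

end Network

end Dgr

theorem irreducible_of_no_equal_children_general (X : Type) (N : Dgr X)
    (hN : N.IsPhyloNetwork) (hc : N.Compressed)
    (h : ¬ ∃ v w : N.V, v ≠ w ∧ N.IsTreeVertex v ∧ N.IsTreeVertex w ∧
      N.children v = N.children w) :
    N.Irreducible := by
  rintro ⟨v, w, hvw, hv, hw, p, q, rfl, rfl, hiso⟩
  exact hvw (Dgr.endOf_eq_of_iso_pendant hN.1 hc h hv hw hiso)

/-- A semi-resolved, compressed phylogenetic network in which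
no two distinct tree vertices share the same set of children is irreducible. -/
theorem irreducible_of_no_equal_children (X : Type) (N : Dgr X)
    (hN : N.IsPhyloNetwork) (hsr : N.SemiResolved) (hc : N.Compressed)
    (h : ¬ ∃ v w : N.V, v ≠ w ∧ N.IsTreeVertex v ∧ N.IsTreeVertex w ∧
      N.children v = N.children w) :
    N.Irreducible :=
  irreducible_of_no_equal_children_general X N hN hc h
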